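/- arXiv:1607.05824 — 3 statements merged into one kernel-verified Lean document; each statement's English description precedes it below -/
import Mathlib

section
/- Let β1 ∈ [0, π/2) and β2 ∈ (π/2, π], let α, x ∈ ℝ, and set λ = cos(α) - cos(β2)/cos(β1). Suppose cos(x) ≠ 0 is allowed to be arbitrary. Then there exist θ ∈ {0, π} and τ ≥ 0 such that cos(x) + τ·cos(β1 - θ) = 0 and cos(x + α) + τ·cos(β2 - θ) > 0 if and only if cos(x)·λ > sin(x)·sin(α). -/
/-!
With `s = ±1` the sign of `cos (β - θ) = s * cos β`, the constraint
`cos x + τ * s * cos β1 = 0` forces `τ * s = -cos x / cos β1`, and a sign `s` making `τ ≥ 0`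
always exists. The second quantity is then independent of `θ` and `τ`: it equals
`cos (x + α) - cos x * cos β2 / cos β1 = cos x * λ - sin x * sin α`.
-/

open Real

lemma exists_sign_mul_abs (t : ℝ) : ∃ s ∈ ({1, -1} : Set ℝ), s * |t| = t := by
  rcases abs_choice t with h | h
  · exact ⟨1, by simp, by rw [h, one_mul]⟩
  · exact ⟨-1, by simp, by rw [h]; ring⟩

lemma exists_zero_or_pi_iff_exists_sign (P : ℝ → ℝ → Prop) (β1 β2 : ℝ) :
    (∃ θ ∈ ({0, π} : Set ℝ), P (cos (β1 - θ)) (cos (β2 - θ))) ↔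
      ∃ s ∈ ({1, -1} : Set ℝ), P (s * cos β1) (s * cos β2) := by
  simp [cos_sub_pi]

lemma exists_sign_nonneg_iff {a b c₁ c₂ : ℝ} (hc₁ : c₁ ≠ 0) :
    (∃ s ∈ ({1, -1} : Set ℝ), ∃ τ : ℝ, 0 ≤ τ ∧ a + τ * (s * c₁) = 0 ∧ 0 < b + τ * (s * c₂)) ↔
      0 < b - a * c₂ / c₁ := by
  constructor
  · rintro ⟨s, -, τ, -, heq, hpos⟩
    have hτs : τ * s = -a / c₁ := by
      field_simp
      linarith
    calc 0 < b + τ * s * c₂ := by rwa [mul_assoc]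
      _ = b - a * c₂ / c₁ := by rw [hτs]; ring
  · intro h
    obtain ⟨s, hs, hst⟩ := exists_sign_mul_abs (-a / c₁)
    refine ⟨s, hs, |-a / c₁|, abs_nonneg _, ?_, ?_⟩
    · rw [← mul_assoc, mul_comm _ s, hst]
      field_simp
      ring
    · rw [← mul_assoc, mul_comm _ s, hst]
      convert h using 1
      ring

theorem exists_theta_tau_iff_general (β1 β2 α x lam : ℝ)
    (hβ1 : β1 ∈ Set.Ico 0 (π / 2))
    (hlam : lam = Real.cos α - Real.cos β2 / Real.cos β1) :
    (∃ θ ∈ ({0, π} : Set ℝ), ∃ τ : ℝ, 0 ≤ τ ∧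
        Real.cos x + τ * Real.cos (β1 - θ) = 0 ∧
        0 < Real.cos (x + α) + τ * Real.cos (β2 - θ)) ↔
      Real.sin x * Real.sin α < Real.cos x * lam := by
  have hcos_β1 : cos β1 ≠ 0 :=
    (cos_pos_of_mem_Ioo ⟨by linarith [hβ1.1, pi_pos], hβ1.2⟩).ne'
  have hreduced : cos (x + α) - cos x * cos β2 / cos β1 = cos x * lam - sin x * sin α := by
    rw [hlam, cos_add]
    ring
  rw [exists_zero_or_pi_iff_exists_sign
      (fun u v => ∃ τ : ℝ, 0 ≤ τ ∧ cos x + τ * u = 0 ∧ 0 < cos (x + α) + τ * v),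
    exists_sign_nonneg_iff hcos_β1, hreduced, sub_pos]

theorem exists_theta_tau_iff (β1 β2 α x lam : ℝ)
    (hβ1 : β1 ∈ Set.Ico 0 (π / 2)) (hβ2 : β2 ∈ Set.Ioc (π / 2) π)
    (hlam : lam = Real.cos α - Real.cos β2 / Real.cos β1) :
    (∃ θ ∈ ({0, π} : Set ℝ), ∃ τ : ℝ, 0 ≤ τ ∧
        Real.cos x + τ * Real.cos (β1 - θ) = 0 ∧
        0 < Real.cos (x + α) + τ * Real.cos (β2 - θ)) ↔
      Real.sin x * Real.sin α < Real.cos x * lam :=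
  exists_theta_tau_iff_general β1 β2 α x lam hβ1 hlam
end

section
/- Let v1, v2, v3 ∈ ℝ² be affinely independent, and let t be a point in the interior of triangle v1v2v3. For any point t' ≠ t* where t* is also in the interior of the triangle, if t' lies in the sub-triangle with vertices v_i, v_j, t* (for some edge v_i v_j of the triangle, using the triangulation of the triangle from t*), then ‖t' − v_i‖ < ‖t* − v_i‖ or ‖t' − v_j‖ < ‖t* − v_j‖. -/
/-!
With `u = x - c`, "`c` is no farther from `v` than `x`" says `2⟪u, v - c⟫ ≤ ‖u‖²`. If this held
for every `v ∈ s`, the half-space `{y | ⟪u, y - c⟫ ≤ ‖u‖² / 2}` would contain `insert c s`, hence its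
convex hull and `x`, giving `‖u‖² ≤ ‖u‖² / 2`, i.e. `x = c`.
-/
open scoped RealInnerProductSpace

variable {E : Type*} [NormedAddCommGroup E] [InnerProductSpace ℝ E]

theorem dist_le_dist_iff_two_mul_inner_le (c v x : E) :
    dist c v ≤ dist x v ↔ 2 * ⟪x - c, v - c⟫ ≤ ‖x - c‖ ^ 2 := by
  have hsq : ‖x - v‖ ^ 2 = ‖x - c‖ ^ 2 - 2 * ⟪x - c, v - c⟫ + ‖v - c‖ ^ 2 := by
    rw [← norm_sub_sq_real]; congr 2; abel
  rw [dist_eq_norm, dist_eq_norm, ← norm_neg (c - v), neg_sub,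
    ← sq_le_sq₀ (norm_nonneg _) (norm_nonneg _), hsq]
  constructor <;> intro h <;> linarith

theorem exists_dist_lt_of_mem_convexHull_insert {s : Set E} {c x : E}
    (hx : x ∈ convexHull ℝ (insert c s)) (hxc : x ≠ c) : ∃ v ∈ s, dist x v < dist c v := by
  by_contra! hfar
  set u := x - c
  let H : Set E := {y | ⟪u, y⟫ ≤ ⟪u, c⟫ + ‖u‖ ^ 2 / 2}
  have hH : insert c s ⊆ H := by
    refine Set.insert_subset ?_ fun v hv => ?_
    · simp only [H, Set.mem_ofPred_eq]
      linarith [sq_nonneg ‖u‖]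
    · have hv := (dist_le_dist_iff_two_mul_inner_le c v x).1 (hfar v hv)
      rw [inner_sub_right] at hv
      simp only [H, Set.mem_ofPred_eq]
      linarith
  have hxH : ⟪u, x⟫ ≤ ⟪u, c⟫ + ‖u‖ ^ 2 / 2 :=
    convexHull_min hH (convex_halfSpace_le (innerₛₗ ℝ u).isLinear _) hx
  have hux : ‖u‖ ^ 2 = ⟪u, x⟫ - ⟪u, c⟫ := by rw [← inner_sub_right, real_inner_self_eq_norm_sq]
  have hu : 0 < ‖u‖ := norm_pos_iff.2 (sub_ne_zero.2 hxc)
  nlinarith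

theorem closer_to_subtriangle_vertex_general
    (tstar t' : EuclideanSpace ℝ (Fin 2))
    (hne : t' ≠ tstar)
    (vi vj : EuclideanSpace ℝ (Fin 2))
    (hsub : t' ∈ convexHull ℝ ({vi, vj, tstar} : Set (EuclideanSpace ℝ (Fin 2)))) :
    ‖t' - vi‖ < ‖tstar - vi‖ ∨ ‖t' - vj‖ < ‖tstar - vj‖ := by
  rw [Set.pair_comm, Set.insert_comm] at hsub
  obtain ⟨v, rfl | rfl, hlt⟩ := exists_dist_lt_of_mem_convexHull_insert hsub hne <;>
    rw [dist_eq_norm, dist_eq_norm] at hlt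
  exacts [Or.inl hlt, Or.inr hlt]

theorem closer_to_subtriangle_vertex
    (v1 v2 v3 : EuclideanSpace ℝ (Fin 2))
    (h : AffineIndependent ℝ ![v1, v2, v3])
    (t tstar t' : EuclideanSpace ℝ (Fin 2))
    (ht : t ∈ interior (convexHull ℝ ({v1, v2, v3} : Set (EuclideanSpace ℝ (Fin 2)))))
    (htstar : tstar ∈ interior (convexHull ℝ ({v1, v2, v3} : Set (EuclideanSpace ℝ (Fin 2)))))
    (hne : t' ≠ tstar)
    (vi vj : EuclideanSpace ℝ (Fin 2))
    (hvi : vi ∈ ({v1, v2, v3} : Set (EuclideanSpace ℝ (Fin 2))))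
    (hvj : vj ∈ ({v1, v2, v3} : Set (EuclideanSpace ℝ (Fin 2))))
    (hij : vi ≠ vj)
    (hsub : t' ∈ convexHull ℝ ({vi, vj, tstar} : Set (EuclideanSpace ℝ (Fin 2)))) :
    ‖t' - vi‖ < ‖tstar - vi‖ ∨ ‖t' - vj‖ < ‖tstar - vj‖ :=
  closer_to_subtriangle_vertex_general tstar t' hne vi vj hsub
end

section
/- Let H be the convex hull of a finite set V ⊆ ℝ² with t* in the interior of H, and let t' ∈ interior(H), t' ≠ t*. Then there exists v ∈ V with ‖t' − v‖ < ‖t* − v‖. -/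
/-!
The points at least as close to `t*` as to `t'` form a closed half-space (bounded by the
perpendicular bisector of `t*t'`). If every vertex lay in it, so would their convex hull and hence
`t'` itself, forcing `t' = t*`.
-/

section
variable {E : Type*} [NormedAddCommGroup E] [InnerProductSpace ℝ E]

theorem convex_setOf_dist_le_dist (a b : E) : Convex ℝ {x | dist x a ≤ dist x b} := by
  have hset : {x | dist x a ≤ dist x b} = {x | inner ℝ (b - a) x ≤ (‖b‖ ^ 2 - ‖a‖ ^ 2) / 2} := by
    ext x
    simp only [Set.mem_ofPred_eq, dist_eq_norm, ← sq_le_sq₀ (norm_nonneg _) (norm_nonneg _),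
      norm_sub_sq_real, inner_sub_left, real_inner_comm x]
    constructor <;> intro h <;> linarith
  rw [hset]
  exact convex_halfSpace_le (innerₛₗ ℝ (b - a)).isLinear _

theorem exists_dist_lt_of_mem_convexHull {s : Set E} {x y : E} (hx : x ∈ convexHull ℝ s)
    (hxy : x ≠ y) : ∃ v ∈ s, dist x v < dist y v := by
  by_contra! h
  have hsub : convexHull ℝ s ⊆ {z | dist z y ≤ dist z x} :=
    convexHull_min (fun v hv => by simpa only [Set.mem_ofPred_eq, dist_comm v] using h v hv)
      (convex_setOf_dist_le_dist y x)
  have hle : dist x y ≤ dist x x := hsub hx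
  exact hxy (dist_le_zero.mp (hle.trans_eq (dist_self x)))
end

theorem closer_to_some_hull_vertex_general
    (V : Set (EuclideanSpace ℝ (Fin 2)))
    (tstar t' : EuclideanSpace ℝ (Fin 2))
    (ht' : t' ∈ interior (convexHull ℝ V))
    (hne : t' ≠ tstar) :
    ∃ v ∈ V, ‖t' - v‖ < ‖tstar - v‖ := by
  simpa only [dist_eq_norm] using exists_dist_lt_of_mem_convexHull (interior_subset ht') hne

theorem closer_to_some_hull_vertex
    (V : Set (EuclideanSpace ℝ (Fin 2))) (hV : V.Finite)
    (tstar t' : EuclideanSpace ℝ (Fin 2))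
    (htstar : tstar ∈ interior (convexHull ℝ V))
    (ht' : t' ∈ interior (convexHull ℝ V))
    (hne : t' ≠ tstar) :
    ∃ v ∈ V, ‖t' - v‖ < ‖tstar - v‖ :=
  closer_to_some_hull_vertex_general V tstar t' ht' hne
end
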